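/- Let μ_C be the Cantor measure on [0,1) (the unique Borel probability measure with ∫ f dμ_C = (1/2) ∫ ( f(x/3) + f((x+2)/3) ) dμ_C(x) for all bounded continuous f), and let r : [0,1) → [0,1) be r(x) = 3x mod 1. Then μ_C is invariant under r (the pushforward of μ_C under r equals μ_C), but μ_C is not strongly invariant for r: the identity ∫ f dμ = (1/3) ∫ Σ_{k=0}^{2} f((x+k)/3) dμ(x) fails for μ = μ_C and some bounded measurable f. -/

import Mathlib

open MeasureTheory

/-- The map `x ↦ N·x mod 1` on `[0,1)`. -/
noncomputable def modMap (N : ℕ) (x : Set.Ico (0:ℝ) 1) : Set.Ico (0:ℝ) 1 :=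
  ⟨Int.fract ((N : ℝ) * x), Int.fract_nonneg _, Int.fract_lt_one _⟩

/-- The `k`-th inverse branch `x ↦ (x + k)/N` of `x ↦ N·x mod 1` on `[0,1)`
(for `k < N` the value `(x+k)/N` already lies in `[0,1)`, so taking the fractional
part does not change it). -/
noncomputable def branchMap (N k : ℕ) (x : Set.Ico (0:ℝ) 1) : Set.Ico (0:ℝ) 1 :=
  ⟨Int.fract (((x : ℝ) + k) / N), Int.fract_nonneg _, Int.fract_lt_one _⟩

/-!
Self-similarity of `μ_C` says `μ_C = ½ (b₀₊ μ_C + b₂₊ μ_C)` for the inverse branches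
`b₀ x = x/3` and `b₂ x = (x+2)/3`, since bounded continuous functions determine a finite Borel
measure. As `r` inverts both branches, `r₊ μ_C = ½ (μ_C + μ_C) = μ_C`. Neither `b₀` nor `b₂`
meets `[1/3, 2/3)`, so the same identity gives `μ_C [1/3, 2/3) = 0`; but exactly one of the
three branches `(x+k)/3` lands there, so for the indicator of `[1/3, 2/3)` the strong-invariance
average is identically `1` while its integral is `0`.
-/

open scoped ENNReal BoundedContinuousFunction

lemma branchMap_coe {N k : ℕ} (hk : k < N) (x : Set.Ico (0:ℝ) 1) :
    (branchMap N k x : ℝ) = ((x : ℝ) + k) / N := by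
  have hN : (0:ℝ) < N := by exact_mod_cast (Nat.zero_le k).trans_lt hk
  have hk' : (k:ℝ) + 1 ≤ N := by exact_mod_cast hk
  refine Int.fract_eq_self.mpr ⟨by have := x.2.1; positivity, ?_⟩
  rw [div_lt_one hN]
  linarith [x.2.2]

lemma continuous_branchMap {N k : ℕ} (hk : k < N) : Continuous (branchMap N k) := by
  refine continuous_induced_rng.mpr ?_
  simp only [Function.comp_def, branchMap_coe hk]
  fun_prop

lemma measurable_modMap (N : ℕ) : Measurable (modMap N) :=
  (measurable_const.mul measurable_subtype_coe).fract.subtype_mk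

lemma modMap_branchMap {N k : ℕ} (hk : k < N) (x : Set.Ico (0:ℝ) 1) :
    modMap N (branchMap N k x) = x := by
  have hN : (N:ℝ) ≠ 0 := by exact_mod_cast ((Nat.zero_le k).trans_lt hk).ne'
  apply Subtype.ext
  change Int.fract ((N:ℝ) * (branchMap N k x : ℝ)) = x
  rw [branchMap_coe hk, mul_div_cancel₀ _ hN, Int.fract_add_natCast, Int.fract_eq_self.mpr x.2]

section SelfSimilar

variable {X : Type*} [MeasurableSpace X] {μ : Measure X} {g h : X → X}

lemma integral_eq_half_add_of_complex [TopologicalSpace X] [OpensMeasurableSpace X]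
    [IsFiniteMeasure μ] (hg : Continuous g) (hh : Continuous h)
    (hμ : ∀ f : X → ℂ, Continuous f → (∃ C, ∀ x, ‖f x‖ ≤ C) →
      ∫ x, f x ∂μ = (2 : ℂ)⁻¹ * ∫ x, (f (g x) + f (h x)) ∂μ)
    (f : X →ᵇ ℝ) :
    ∫ x, f x ∂μ = 2⁻¹ * (∫ x, f (g x) ∂μ + ∫ x, f (h x) ∂μ) := by
  have hc := hμ (fun x => (f x : ℂ)) (by fun_prop)
    ⟨‖f‖, fun x => by simpa using f.norm_coe_le_norm x⟩
  simp only [← Complex.ofReal_add, integral_complex_ofReal] at hc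
  rw [← Complex.ofReal_ofNat, ← Complex.ofReal_inv, ← Complex.ofReal_mul] at hc
  have hfg : Integrable (fun x => f (g x)) μ := (f.compContinuous ⟨g, hg⟩).integrable μ
  have hfh : Integrable (fun x => f (h x)) μ := (f.compContinuous ⟨h, hh⟩).integrable μ
  rw [← integral_add hfg hfh]
  exact Complex.ofReal_injective hc

lemma eq_half_smul_map_add_map [TopologicalSpace X] [HasOuterApproxClosed X] [BorelSpace X]
    [IsFiniteMeasure μ]
    (hg : Continuous g) (hh : Continuous h)
    (hμ : ∀ f : X →ᵇ ℝ, ∫ x, f x ∂μ = 2⁻¹ * (∫ x, f (g x) ∂μ + ∫ x, f (h x) ∂μ)) :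
    μ = (2 : ℝ≥0∞)⁻¹ • (μ.map g + μ.map h) := by
  have : IsFiniteMeasure ((2 : ℝ≥0∞)⁻¹ • (μ.map g + μ.map h)) := Measure.smul_finite _ (by simp)
  refine ext_of_forall_integral_eq_of_IsFiniteMeasure fun f => ?_
  rw [integral_smul_measure, integral_add_measure (f.integrable _) (f.integrable _),
    integral_map hg.aemeasurable f.continuous.aestronglyMeasurable,
    integral_map hh.aemeasurable f.continuous.aestronglyMeasurable, hμ f]
  simp

lemma map_eq_self_of_eq_half_smul_map_add_map {T : X → X} (hT : Measurable T)
    (hg : Measurable g) (hh : Measurable h) (hTg : Function.LeftInverse T g)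
    (hTh : Function.LeftInverse T h) (hμ : μ = (2 : ℝ≥0∞)⁻¹ • (μ.map g + μ.map h)) :
    μ.map T = μ := by
  conv_lhs => rw [hμ]
  rw [Measure.map_smul, Measure.map_add _ _ hT, Measure.map_map hT hg, Measure.map_map hT hh,
    hTg.comp_eq_id, hTh.comp_eq_id, Measure.map_id, ← two_smul ℝ≥0∞ μ, smul_smul,
    ENNReal.inv_mul_cancel two_ne_zero ENNReal.ofNat_ne_top, one_smul]

lemma measure_eq_zero_of_eq_half_smul_map_add_map {S : Set X} (hS : MeasurableSet S)
    (hg : Measurable g) (hh : Measurable h) (hgS : g ⁻¹' S = ∅) (hhS : h ⁻¹' S = ∅)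
    (hμ : μ = (2 : ℝ≥0∞)⁻¹ • (μ.map g + μ.map h)) :
    μ S = 0 := by
  rw [hμ, Measure.smul_apply, Measure.add_apply, Measure.map_apply hg hS,
    Measure.map_apply hh hS, hgS, hhS]
  simp

end SelfSimilar

-- Half-open, so that exactly one of the three inverse branches lands in it.
def middleThird : Set (Set.Ico (0:ℝ) 1) := Subtype.val ⁻¹' Set.Ico (1/3) (2/3)

lemma measurableSet_middleThird : MeasurableSet middleThird :=
  measurable_subtype_coe measurableSet_Ico

lemma branchMap_mem_middleThird_iff {k : ℕ} (hk : k < 3) (x : Set.Ico (0:ℝ) 1) :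
    branchMap 3 k x ∈ middleThird ↔ k = 1 := by
  obtain ⟨hx0, hx1⟩ := x.2
  simp only [middleThird, Set.mem_preimage, Set.mem_Ico, branchMap_coe hk]
  interval_cases k <;> norm_num <;> intros <;> (try constructor) <;> linarith

lemma preimage_branchMap_middleThird {k : ℕ} (hk : k < 3) (hk1 : k ≠ 1) :
    branchMap 3 k ⁻¹' middleThird = ∅ :=
  Set.eq_empty_of_forall_notMem fun x hx => hk1 ((branchMap_mem_middleThird_iff hk x).mp hx)

lemma sum_indicator_middleThird_branchMap (x : Set.Ico (0:ℝ) 1) :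
    ∑ k ∈ Finset.range 3, middleThird.indicator (fun _ => (1 : ℂ)) (branchMap 3 k x) = 1 := by
  simp [Finset.sum_range_succ, branchMap_mem_middleThird_iff]

/-- **The Cantor measure is invariant but not strongly invariant for `x ↦ 3x mod 1`.**
Let `μ_C` be the Cantor measure on `[0,1)`, i.e. the (unique) Borel probability measure
with `∫ f dμ_C = (1/2) ∫ (f(x/3) + f((x+2)/3)) dμ_C(x)` for all bounded continuous `f`,
and let `r(x) = 3x mod 1`.  Then the pushforward of `μ_C` under `r` equals `μ_C`, but
the strong invariance identity `∫ f dμ = (1/3) ∫ Σ_{k=0}^{2} f((x+k)/3) dμ(x)` fails for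
`μ = μ_C` and some bounded measurable `f`. -/
theorem cantor_measure_invariant_not_strongly_invariant
    (μC : Measure (Set.Ico (0:ℝ) 1)) [IsProbabilityMeasure μC]
    (hμC : ∀ f : Set.Ico (0:ℝ) 1 → ℂ, Continuous f → (∃ C, ∀ x, ‖f x‖ ≤ C) →
      ∫ x, f x ∂μC
        = (2 : ℂ)⁻¹ * ∫ x, (f (branchMap 3 0 x) + f (branchMap 3 2 x)) ∂μC) :
    Measure.map (modMap 3) μC = μC ∧
    ∃ f : Set.Ico (0:ℝ) 1 → ℂ, Measurable f ∧ (∃ C, ∀ x, ‖f x‖ ≤ C) ∧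
      ∫ x, f x ∂μC
        ≠ (3 : ℂ)⁻¹ * ∫ x, ∑ k ∈ Finset.range 3, f (branchMap 3 k x) ∂μC := by
  have h₀ : Continuous (branchMap 3 0) := continuous_branchMap (by norm_num)
  have h₂ : Continuous (branchMap 3 2) := continuous_branchMap (by norm_num)
  have hself : μC = (2 : ℝ≥0∞)⁻¹ • (μC.map (branchMap 3 0) + μC.map (branchMap 3 2)) :=
    eq_half_smul_map_add_map h₀ h₂ (integral_eq_half_add_of_complex h₀ h₂ hμC)
  have hnull : μC middleThird = 0 :=
    measure_eq_zero_of_eq_half_smul_map_add_map measurableSet_middleThird h₀.measurable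
      h₂.measurable (preimage_branchMap_middleThird (by norm_num) (by norm_num))
      (preimage_branchMap_middleThird (by norm_num) (by norm_num)) hself
  refine ⟨map_eq_self_of_eq_half_smul_map_add_map (measurable_modMap 3) h₀.measurable
    h₂.measurable (modMap_branchMap (by norm_num)) (modMap_branchMap (by norm_num)) hself,
    middleThird.indicator fun _ => 1, measurable_const.indicator measurableSet_middleThird,
    ⟨1, fun x => ?_⟩, ?_⟩
  · exact (norm_indicator_le_norm_self _ x).trans (by simp)
  · simp [integral_indicator_const _ measurableSet_middleThird, measureReal_def, hnull,
      sum_indicator_middleThird_branchMap]
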